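/- arXiv:0911.3370 — 2 statements merged into one kernel-verified Lean document; each statement's English description precedes it below -/
import Mathlib

section
/- Let μ > p, p ∈ ℤ⁺, μ non-integer, m = ⌈μ⌉, ν = m - μ, f defined on ℕ_a, a ∈ ℤ⁺, with Δ^k f(a) = 0 for k = p, ..., m-1. Let γ, δ > 1 with 1/γ + 1/δ = 1, and b ≥ a+m-p. Then ∑_{j=a+m-p}^{b} |Δ^p f(j)|^δ ≤ (1/Γ(μ-p)^δ)·[∑_{j=a+m-p}^{b} (∑_{s=a+ν}^{j-μ+p} ((j-s-1)^(μ-p-1))^γ)^{δ/γ}]·(∑_{s=a+ν}^{b-μ+p} |Δ_*^μ f(s)|^δ). -/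
open Finset

/-- Generalized falling factorial `t^(α) = Γ(t+1)/Γ(t-α+1)`. -/
noncomputable def gff (t α : ℝ) : ℝ := Real.Gamma (t + 1) / Real.Gamma (t - α + 1)

/-- Forward difference operator `Δf(t) = f(t+1) - f(t)`. -/
def fdiff (f : ℝ → ℝ) : ℝ → ℝ := fun t => f (t + 1) - f t

/-- The ν-th fractional sum with base point `a`:
`Δ^{-ν} f(t) = (1/Γ(ν)) ∑_{s=a}^{t-ν} (t-s-1)^(ν-1) f(s)`, the sum running over
`s = a, a+1, ..., t-ν` (for `t ∈ ℕ_{a+ν}`, there are `t-ν-a+1` terms). -/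
noncomputable def fsum (ν a : ℝ) (f : ℝ → ℝ) (t : ℝ) : ℝ :=
  (1 / Real.Gamma ν) *
    ∑ j ∈ Finset.range ((⌊t - ν - a⌋).toNat + 1),
      gff (t - (a + j) - 1) (ν - 1) * f (a + j)

/-- The Caputo-like fractional difference `Δ_*^μ f = Δ^{-(⌈μ⌉-μ)} (Δ^{⌈μ⌉} f)`. -/
noncomputable def caputo (μ a : ℝ) (f : ℝ → ℝ) : ℝ → ℝ :=
  fsum ((⌈μ⌉₊ : ℝ) - μ) a (fdiff^[⌈μ⌉₊] f)

/-! Write `(1 - X)^(-r)` for `multichooseSeries r = ∑ₙ multichoose r n • Xⁿ`. Since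
`Γ(n + ν) / Γ(n + 1) = Γ(ν) · multichoose ν n`, the kernel `(t - s - 1)^(ν-1) / Γ(ν)` of the
ν-th fractional sum at `t = a + ν + i`, `s = a + k` is `multichoose ν (i - k)`: fractional sums
are Cauchy products with `(1 - X)^(-ν)`, and the Chu–Vandermonde identity
`(1 - X)^(-α) (1 - X)^(-β) = (1 - X)^(-(α + β))` is their semigroup law. Hence summing
`Δ_*^μ f` against the kernel of order `μ - p` is `Γ(μ - p)` times the `(m - p)`-fold sum of
`Δ^(m-p) (Δ^p f)`, which, the differences of `Δ^p f` of order `< m - p` vanishing at `a`, is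
`Γ(μ - p) Δ^p f(j)`. Hölder's inequality for each `j`, summed over `j`, gives the bound. -/

open PowerSeries

theorem Ring.multichoose_add {R : Type*} [CommRing R] [BinomialRing R] (r s : R) (n : ℕ) :
    Ring.multichoose (r + s) n =
      ∑ ij ∈ antidiagonal n, Ring.multichoose r ij.1 * Ring.multichoose s ij.2 := by
  have h := Ring.add_choose_eq n (Commute.all (-r) (-s))
  rw [← neg_add, Ring.choose_neg'] at h
  have hsign : ∀ ij ∈ antidiagonal n, Ring.choose (-r) ij.1 * Ring.choose (-s) ij.2 =
      Int.negOnePow n • (Ring.multichoose r ij.1 * Ring.multichoose s ij.2) := by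
    rintro ⟨i, j⟩ hij
    rw [HasAntidiagonal.mem_antidiagonal] at hij
    rw [Ring.choose_neg', Ring.choose_neg', smul_mul_smul_comm, ← Int.negOnePow_add, ← hij]
    push_cast; rfl
  rw [sum_congr rfl hsign, ← smul_sum] at h
  exact MulAction.injective _ h

namespace PowerSeries

variable {R : Type*} [CommRing R] [BinomialRing R]

noncomputable def multichooseSeries (r : R) : R⟦X⟧ := mk (Ring.multichoose r)

@[simp]
theorem coeff_multichooseSeries (r : R) (n : ℕ) :
    coeff n (multichooseSeries r) = Ring.multichoose r n :=
  coeff_mk _ _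

theorem multichooseSeries_add (r s : R) :
    multichooseSeries (r + s) = multichooseSeries r * multichooseSeries s := by
  ext n
  rw [coeff_mul, coeff_multichooseSeries, Ring.multichoose_add]
  simp

theorem multichooseSeries_zero : multichooseSeries (0 : R) = 1 := by
  ext (_ | n)
  · simp
  · simp [Ring.multichoose_zero_succ, coeff_one]

theorem coeff_mul_multichooseSeries (φ : R⟦X⟧) (r : R) (n : ℕ) :
    coeff n (φ * multichooseSeries r) =
      ∑ k ∈ range (n + 1), coeff k φ * Ring.multichoose r (n - k) := by
  rw [coeff_mul, Nat.sum_antidiagonal_eq_sum_range_succ (fun i j => coeff i φ * coeff j _)]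
  simp only [coeff_multichooseSeries]

theorem coeff_multichooseSeries_one_mul (φ : R⟦X⟧) (n : ℕ) :
    coeff n (multichooseSeries 1 * φ) = ∑ k ∈ range (n + 1), coeff k φ := by
  rw [coeff_mul, Nat.sum_antidiagonal_eq_sum_range_succ (fun i j => coeff i _ * coeff j φ),
    ← sum_range_reflect (fun k => coeff k φ)]
  simp [Ring.multichoose_one]

end PowerSeries

theorem Real.Gamma_add_nat_eq_mul_multichoose {α : ℝ} (hα : 0 < α) (n : ℕ) :
    Real.Gamma (α + n) = Real.Gamma α * n.factorial * Ring.multichoose α n := by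
  rw [mul_assoc, ← nsmul_eq_mul, Ring.factorial_nsmul_multichoose_eq_ascPochhammer,
    Polynomial.ascPochhammer_smeval_eq_eval]
  induction n with
  | zero => simp
  | succ n ih =>
    rw [ascPochhammer_succ_eval, Nat.cast_succ, ← add_assoc,
      Real.Gamma_add_one (by positivity), ih]
    ring

theorem gff_natCast_add_sub_one {α : ℝ} (hα : 0 < α) (n : ℕ) :
    gff (n + α - 1) (α - 1) = Real.Gamma α * Ring.multichoose α n := by
  rw [gff, show (n : ℝ) + α - 1 + 1 = α + n by ring,
    show (n : ℝ) + α - 1 - (α - 1) + 1 = n + 1 by ring, Real.Gamma_add_nat_eq_mul_multichoose hα,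
    Real.Gamma_nat_eq_factorial]
  field_simp

theorem sum_range_fdiff (h : ℝ → ℝ) (b : ℝ) (n : ℕ) :
    ∑ k ∈ range n, fdiff h (b + k) = h (b + n) - h b := by
  simpa [fdiff, add_assoc] using sum_range_sub (fun k : ℕ => h (b + k)) n

theorem apply_add_natCast_eq_zero_of_fdiff_iter (h : ℝ → ℝ) (a : ℝ) (q : ℕ)
    (hq : ∀ k ≤ q, fdiff^[k] h a = 0) : h (a + q) = 0 := by
  rw [← nsmul_one q, shift_eq_sum_fwdDiff_iter 1 h q a]
  exact sum_eq_zero fun k hk => by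
    rw [show fwdDiff 1 = fdiff from rfl, hq k (Nat.lt_succ_iff.mp (mem_range.mp hk)), smul_zero]

/-- Discrete Taylor formula: `h (a + q + n) = ∑_{l ≤ n} multichoose q (n - l) • Δ^q h (a + l)`
when the differences of `h` of order `< q` vanish at `a`. -/
theorem multichooseSeries_natCast_mul_mk_fdiff_iter (h : ℝ → ℝ) (a : ℝ) (q : ℕ)
    (hq : ∀ k < q, fdiff^[k] h a = 0) :
    multichooseSeries (q : ℝ) * mk (fun l : ℕ => fdiff^[q] h (a + l)) =
      mk (fun n : ℕ => h (a + q + n)) := by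
  induction q generalizing h with
  | zero => simp [multichooseSeries_zero]
  | succ q ih =>
    have hΔ : ∀ k < q, fdiff^[k] (fdiff h) a = 0 := fun k hk => by
      rw [← Function.iterate_succ_apply]
      exact hq (k + 1) (by omega)
    have h_start : h (a + q) = 0 :=
      apply_add_natCast_eq_zero_of_fdiff_iter h a q fun k hk => hq k (Nat.lt_succ_of_le hk)
    calc multichooseSeries ((q + 1 : ℕ) : ℝ) * mk (fun l : ℕ => fdiff^[q + 1] h (a + l))
        = multichooseSeries 1 *
            (multichooseSeries (q : ℝ) * mk (fun l : ℕ => fdiff^[q] (fdiff h) (a + l))) := by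
          rw [Nat.cast_succ, add_comm, multichooseSeries_add, mul_assoc]
          simp only [Function.iterate_succ_apply]
      _ = multichooseSeries 1 * mk (fun n : ℕ => fdiff h (a + q + n)) := by rw [ih _ hΔ]
      _ = mk (fun n : ℕ => h (a + (q + 1 : ℕ) + n)) := by
          ext n
          simp only [coeff_multichooseSeries_one_mul, coeff_mk]
          rw [sum_range_fdiff, h_start, sub_zero]
          push_cast
          ring_nf

theorem fsum_add_nat {ν : ℝ} (hν : 0 < ν) (a : ℝ) (g : ℝ → ℝ) (i : ℕ) :
    fsum ν a g (a + ν + i) = coeff i (mk (fun l : ℕ => g (a + l)) * multichooseSeries ν) := by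
  rw [fsum, show a + ν + i - ν - a = i by ring, Int.floor_natCast, Int.toNat_natCast,
    coeff_mul_multichooseSeries, mul_sum]
  refine sum_congr rfl fun k hk => ?_
  have hki : k ≤ i := Nat.lt_succ_iff.mp (mem_range.mp hk)
  rw [show a + ν + i - (a + k) - 1 = ((i - k : ℕ) : ℝ) + ν - 1 by push_cast [hki]; ring,
    gff_natCast_add_sub_one hν, coeff_mk]
  field_simp [(Real.Gamma_pos_of_pos hν).ne']

theorem sum_gff_mul_caputo_eq {μ : ℝ} {p m : ℕ} (hpμ : (p : ℝ) < μ) (hm : m = ⌈μ⌉₊)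
    (hμm : μ < m) (f : ℝ → ℝ) (a : ℕ) (hz : ∀ k, p ≤ k → k ≤ m - 1 → fdiff^[k] f a = 0)
    (j : ℕ) (hj : a + m - p ≤ j) :
    ∑ i ∈ range (j - (a + m - p) + 1),
        gff ((j : ℝ) - (a + (m - μ) + i) - 1) (μ - p - 1) * caputo μ a f (a + (m - μ) + i) =
      Real.Gamma (μ - p) * fdiff^[p] f j := by
  have hpm : p < m := by exact_mod_cast hpμ.trans hμm
  obtain ⟨N, rfl⟩ : ∃ N, j = a + (m - p) + N := ⟨j - (a + m - p), by omega⟩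
  rw [show a + (m - p) + N - (a + m - p) = N by omega]
  set M := mk (fun l : ℕ => fdiff^[m] f (a + l))
  have hkernel : ∀ i ∈ range (N + 1), gff (((a + (m - p) + N : ℕ) : ℝ) - (a + (m - μ) + i) - 1)
      (μ - p - 1) = Real.Gamma (μ - p) * Ring.multichoose (μ - p) (N - i) := fun i hi => by
    rw [← gff_natCast_add_sub_one (sub_pos.mpr hpμ)]
    push_cast [hpm.le, Nat.lt_succ_iff.mp (mem_range.mp hi)]
    ring_nf
  have hcaputo (i : ℕ) :
      caputo μ a f (a + (m - μ) + i) = coeff i (M * multichooseSeries ((m : ℝ) - μ)) := by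
    rw [caputo, ← hm]
    exact fsum_add_nat (sub_pos.mpr hμm) _ _ i
  have hseries : M * multichooseSeries ((m : ℝ) - μ) * multichooseSeries (μ - p) =
      multichooseSeries ((m - p : ℕ) : ℝ) *
        mk (fun l : ℕ => fdiff^[m - p] (fdiff^[p] f) (a + l)) := by
    simp only [← Function.iterate_add_apply, Nat.sub_add_cancel hpm.le]
    rw [show ((m - p : ℕ) : ℝ) = μ - p + (m - μ) by push_cast [hpm.le]; ring,
      multichooseSeries_add]
    ring
  calc _ = Real.Gamma (μ - p) * ∑ i ∈ range (N + 1),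
        coeff i (M * multichooseSeries ((m : ℝ) - μ)) * Ring.multichoose (μ - p) (N - i) := by
        rw [mul_sum]
        refine sum_congr rfl fun i hi => ?_
        rw [hkernel i hi, hcaputo]
        ring
    _ = Real.Gamma (μ - p) *
          coeff N (M * multichooseSeries ((m : ℝ) - μ) * multichooseSeries (μ - p)) := by
        rw [coeff_mul_multichooseSeries]
    _ = Real.Gamma (μ - p) * fdiff^[p] f (a + (m - p) + N : ℕ) := by
        rw [hseries, multichooseSeries_natCast_mul_mk_fdiff_iter, coeff_mk]
        · push_cast [hpm.le]
          ring_nf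
        · intro k hk
          rw [← Function.iterate_add_apply]
          exact hz (k + p) (by omega) (by omega)

theorem abs_sum_mul_rpow_le {ι : Type*} (s : Finset ι) {γ δ : ℝ} (hγδ : γ.HolderConjugate δ)
    {g : ι → ℝ} (y : ι → ℝ) (hg : ∀ i ∈ s, 0 ≤ g i) :
    |∑ i ∈ s, g i * y i| ^ δ ≤ (∑ i ∈ s, g i ^ γ) ^ (δ / γ) * ∑ i ∈ s, |y i| ^ δ := by
  have hG : 0 ≤ ∑ i ∈ s, g i ^ γ := sum_nonneg fun i hi => Real.rpow_nonneg (hg i hi) γ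
  have hY : 0 ≤ ∑ i ∈ s, |y i| ^ δ := sum_nonneg fun i _ => Real.rpow_nonneg (abs_nonneg _) δ
  have hholder : |∑ i ∈ s, g i * y i| ≤
      (∑ i ∈ s, g i ^ γ) ^ (1 / γ) * (∑ i ∈ s, |y i| ^ δ) ^ (1 / δ) := by
    refine (abs_sum_le_sum_abs _ _).trans (le_of_eq_of_le (sum_congr rfl fun i hi => ?_)
      (Real.inner_le_Lp_mul_Lq_of_nonneg s hγδ hg fun i _ => abs_nonneg (y i)))
    rw [abs_mul, abs_of_nonneg (hg i hi)]
  calc |∑ i ∈ s, g i * y i| ^ δ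
      ≤ ((∑ i ∈ s, g i ^ γ) ^ (1 / γ) * (∑ i ∈ s, |y i| ^ δ) ^ (1 / δ)) ^ δ :=
        Real.rpow_le_rpow (abs_nonneg _) hholder hγδ.right_pos.le
    _ = (∑ i ∈ s, g i ^ γ) ^ (δ / γ) * ∑ i ∈ s, |y i| ^ δ := by
        rw [Real.mul_rpow (by positivity) (by positivity), ← Real.rpow_mul hG, ← Real.rpow_mul hY,
          one_div_mul_eq_div, one_div_mul_cancel hγδ.symm.ne_zero, Real.rpow_one]

theorem rpow_abs_fdiff_iter_le {μ : ℝ} {p m : ℕ} (hpμ : (p : ℝ) < μ) (hm : m = ⌈μ⌉₊)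
    (hμm : μ < m) (f : ℝ → ℝ) (a : ℕ) (hz : ∀ k, p ≤ k → k ≤ m - 1 → fdiff^[k] f a = 0)
    {γ δ : ℝ} (hγδ : γ.HolderConjugate δ) {j B : ℕ} (hj : a + m - p ≤ j)
    (hjB : j - (a + m - p) ≤ B) :
    |fdiff^[p] f j| ^ δ ≤ 1 / Real.Gamma (μ - p) ^ δ *
      ((∑ i ∈ range (j - (a + m - p) + 1),
          gff ((j : ℝ) - (a + (m - μ) + i) - 1) (μ - p - 1) ^ γ) ^ (δ / γ) *
        ∑ i ∈ range (B + 1), |caputo μ a f (a + (m - μ) + i)| ^ δ) := by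
  have hpm : p < m := by exact_mod_cast hpμ.trans hμm
  have hΓ : 0 < Real.Gamma (μ - p) := Real.Gamma_pos_of_pos (sub_pos.mpr hpμ)
  have hkernel : ∀ i ∈ range (j - (a + m - p) + 1),
      0 ≤ gff ((j : ℝ) - (a + (m - μ) + i) - 1) (μ - p - 1) := by
    intro i hi
    have hij : ((i + (a + m - p) : ℕ) : ℝ) ≤ j := by
      have := mem_range.mp hi
      exact_mod_cast (by omega : i + (a + m - p) ≤ j)
    rw [Nat.cast_add, Nat.cast_sub (by omega : p ≤ a + m)] at hij
    push_cast at hij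
    exact div_nonneg (Real.Gamma_pos_of_pos (by linarith)).le
      (Real.Gamma_pos_of_pos (by linarith)).le
  calc |fdiff^[p] f j| ^ δ
      = 1 / Real.Gamma (μ - p) ^ δ * |∑ i ∈ range (j - (a + m - p) + 1),
          gff ((j : ℝ) - (a + (m - μ) + i) - 1) (μ - p - 1) *
            caputo μ a f (a + (m - μ) + i)| ^ δ := by
        rw [sum_gff_mul_caputo_eq hpμ hm hμm f a hz j hj, abs_mul, abs_of_pos hΓ,
          Real.mul_rpow hΓ.le (abs_nonneg _)]
        field_simp
    _ ≤ 1 / Real.Gamma (μ - p) ^ δ *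
      ((∑ i ∈ range (j - (a + m - p) + 1),
          gff ((j : ℝ) - (a + (m - μ) + i) - 1) (μ - p - 1) ^ γ) ^ (δ / γ) *
        ∑ i ∈ range (j - (a + m - p) + 1), |caputo μ a f (a + (m - μ) + i)| ^ δ) := by
        gcongr
        exact abs_sum_mul_rpow_le _ hγδ _ hkernel
    _ ≤ _ := by
        gcongr
        exact Real.rpow_nonneg (sum_nonneg fun i hi => Real.rpow_nonneg (hkernel i hi) γ) _

theorem stmt14_general (μ ν : ℝ) (p : ℕ) (hμ : (p : ℝ) < μ) (hni : ∀ n : ℤ, μ ≠ n)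
    (m : ℕ) (hm : m = ⌈μ⌉₊) (hν : ν = m - μ) (f : ℝ → ℝ) (a b : ℕ)
    (hz : ∀ k, p ≤ k → k ≤ m - 1 → fdiff^[k] f a = 0)
    (γ δ : ℝ) (hγ : 1 < γ) (hγδ : 1 / γ + 1 / δ = 1) :
    ∑ j ∈ Finset.Icc (a + m - p) b, |fdiff^[p] f (j : ℝ)| ^ δ ≤
      (1 / Real.Gamma (μ - p) ^ δ) *
        (∑ j ∈ Finset.Icc (a + m - p) b,
            (∑ i ∈ Finset.range (j - (a + m - p) + 1),
                gff ((j : ℝ) - (a + ν + i) - 1) (μ - p - 1) ^ γ) ^ (δ / γ)) *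
        (∑ i ∈ Finset.range (b - (a + m - p) + 1), |caputo μ a f (a + ν + i)| ^ δ) := by
  have hμm : μ < m := (hm ▸ Nat.le_ceil μ).lt_of_ne (by exact_mod_cast hni m)
  have hholder : γ.HolderConjugate δ :=
    Real.holderConjugate_iff.mpr ⟨hγ, by simpa only [one_div] using hγδ⟩
  subst hν
  rw [mul_assoc, sum_mul, mul_sum]
  refine sum_le_sum fun j hj => ?_
  rw [mem_Icc] at hj
  exact rpow_abs_fdiff_iter_le hμ hm hμm f a hz hholder hj.1 (by omega)

theorem stmt14 (μ ν : ℝ) (p : ℕ) (hμ : (p : ℝ) < μ) (hni : ∀ n : ℤ, μ ≠ n)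
    (m : ℕ) (hm : m = ⌈μ⌉₊) (hν : ν = m - μ) (f : ℝ → ℝ) (a b : ℕ)
    (hb : a + m - p ≤ b) (hz : ∀ k, p ≤ k → k ≤ m - 1 → fdiff^[k] f a = 0)
    (γ δ : ℝ) (hγ : 1 < γ) (hδ : 1 < δ) (hγδ : 1 / γ + 1 / δ = 1) :
    ∑ j ∈ Finset.Icc (a + m - p) b, |fdiff^[p] f (j : ℝ)| ^ δ ≤
      (1 / Real.Gamma (μ - p) ^ δ) *
        (∑ j ∈ Finset.Icc (a + m - p) b,
            (∑ i ∈ Finset.range (j - (a + m - p) + 1),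
                gff ((j : ℝ) - (a + ν + i) - 1) (μ - p - 1) ^ γ) ^ (δ / γ)) *
        (∑ i ∈ Finset.range (b - (a + m - p) + 1), |caputo μ a f (a + ν + i)| ^ δ) :=
  stmt14_general μ ν p hμ hni m hm hν f a b hz γ δ hγ hγδ
end

section
/- Let 0 < μ₁ < μ₂ < ... < μ_k with each μ_l non-integer, m_l = ⌈μ_l⌉, ν_l = m_l - μ_l, f defined on ℕ_a, a ∈ ℤ⁺, with Δ^τ f(a) = 0 for τ = 0, 1, ..., m_k - 1. Let r ≥ 1 and C_l(s) > 0 on [a+ν_l, b-μ_l]. Set B_l = ∑_{s=a+ν_l}^{b-μ_l} C_l(s)(Δ_*^{μ_l} f(s))², δ* = max_{1≤l≤k} (1/Γ(μ_l)²)·[∑_{j=a+m_l}^{b} (∑_{s=a+ν_l}^{j-μ_l} ((j-s-1)^(μ_l-1))²)^{r/2}]^{2/r}, and ρ* = max_{1≤l≤k} max_{s ∈ [a+ν_l, b-μ_l]} 1/C_l(s). Then (∑_{j=a+m_k}^{b} |f(j)|^r)^{1/r} ≤ √(δ*·ρ*)·((∑_{l=1}^{k} B_l)/k)^{1/2}.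 -/
open Finset

/-!
Evaluated on the grid `a + ν + ℕ`, a fractional sum of order `ν` based at `a` is the Cauchy product
of the sequence with the coefficients `Γ(n + ν) / (Γ ν n!)` of `(1 - X) ^ (-ν)`, i.e. multiplication
of generating series by `(1 - X) ^ (-ν)`. The initial conditions `Δ^τ f a = 0` (`τ < m`) say that
the series of `f (a + m + ·)` is `(1 - X) ^ (-m)` times the series of `Δ^m f (a + ·)`. Since
`(1 - X) ^ (-μ) (1 - X) ^ (-ν) = (1 - X) ^ (-m)`, `f (a + m + N)` is the fractional sum of order `μ`
of its own Caputo difference. Cauchy–Schwarz on this representation bounds `f j ^ 2` by the kernel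
energy times `ρ_l B_l`; summing `r/2`-th powers gives the `ℓ^r` bound for each order `μ_l`, and
averaging these `k` bounds gives the theorem.
-/

lemma Gamma_add_natCast_eq_mul_eval_ascPochhammer {μ : ℝ} (hμ : 0 < μ) (n : ℕ) :
    Real.Gamma (μ + n) = Real.Gamma μ * (ascPochhammer ℝ n).eval μ := by
  induction n with
  | zero => simp
  | succ n ih =>
    rw [ascPochhammer_succ_eval, ← mul_assoc, ← ih, Nat.cast_succ, ← add_assoc,
      Real.Gamma_add_one (by positivity), mul_comm]

lemma Gamma_add_natCast_eq_mul_multichoose {μ : ℝ} (hμ : 0 < μ) (n : ℕ) :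
    Real.Gamma (μ + n) = Real.Gamma μ * n.factorial * Ring.multichoose μ n := by
  rw [mul_assoc, ← nsmul_eq_mul, Ring.factorial_nsmul_multichoose_eq_ascPochhammer,
    Polynomial.ascPochhammer_smeval_eq_eval, Gamma_add_natCast_eq_mul_eval_ascPochhammer hμ]

lemma gff_eq_Gamma_mul_multichoose {ν : ℝ} (hν : 0 < ν) (n : ℕ) :
    gff (n + ν - 1) (ν - 1) = Real.Gamma ν * Ring.multichoose ν n := by
  have hn : Real.Gamma (n + 1) ≠ 0 := (Real.Gamma_pos_of_pos (by positivity)).ne'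
  rw [gff, show (n : ℝ) + ν - 1 + 1 = ν + n by ring,
    show (n : ℝ) + ν - 1 - (ν - 1) + 1 = n + 1 by ring, Gamma_add_natCast_eq_mul_multichoose hν,
    Real.Gamma_nat_eq_factorial]
  field_simp

open PowerSeries

noncomputable def invOneSubRpow (μ : ℝ) : ℝ⟦X⟧ := rescale (-1 : ℝ) (binomialSeries ℝ (-μ))

lemma coeff_invOneSubRpow (μ : ℝ) (n : ℕ) :
    coeff n (invOneSubRpow μ) = Ring.multichoose μ n := by
  rw [invOneSubRpow, coeff_rescale, binomialSeries_coeff, Ring.choose_neg', smul_eq_mul, mul_one,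
    Units.smul_def, zsmul_eq_mul, Int.cast_negOnePow_natCast, ← mul_assoc, ← mul_pow]
  norm_num

lemma invOneSubRpow_add (μ ν : ℝ) :
    invOneSubRpow (μ + ν) = invOneSubRpow μ * invOneSubRpow ν := by
  rw [invOneSubRpow, neg_add, binomialSeries_add, map_mul]; rfl

lemma invOneSubRpow_neg_natCast (m : ℕ) : invOneSubRpow (-m) = (1 - X) ^ m := by
  rw [invOneSubRpow, neg_neg, binomialSeries_nat, map_pow, map_add, map_one, rescale_X]
  simp [sub_eq_add_neg]

lemma invOneSubRpow_mul_neg (μ : ℝ) : invOneSubRpow μ * invOneSubRpow (-μ) = 1 := by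
  rw [← invOneSubRpow_add, add_neg_cancel, invOneSubRpow, neg_zero, binomialSeries_zero, map_one]

lemma coeff_mk_mul (K : ℕ → ℝ) (φ : ℝ⟦X⟧) (n : ℕ) :
    coeff n (mk K * φ) = ∑ i ∈ Finset.range (n + 1), K (n - i) * coeff i φ := by
  rw [mul_comm, coeff_mul, Finset.Nat.sum_antidiagonal_eq_sum_range_succ
    (fun i j => coeff i φ * coeff j (mk K))]
  simp only [coeff_mk, mul_comm]

lemma mk_multichoose_eq (μ : ℝ) : mk (Ring.multichoose μ) = invOneSubRpow μ := by
  ext n; rw [coeff_mk, coeff_invOneSubRpow]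

noncomputable def diffSeries (f : ℝ → ℝ) (a : ℝ) (τ : ℕ) : ℝ⟦X⟧ :=
  mk fun n => fdiff^[τ] f (a + n)

lemma X_mul_diffSeries_succ {f : ℝ → ℝ} {a : ℝ} {τ : ℕ} (h : fdiff^[τ] f a = 0) :
    X * diffSeries f a (τ + 1) = (1 - X) * diffSeries f a τ := by
  ext (_ | n)
  · simp [diffSeries, h]
  · rw [sub_mul, one_mul, map_sub, coeff_succ_X_mul, coeff_succ_X_mul]
    simp only [diffSeries, coeff_mk, Function.iterate_succ_apply', fdiff, Nat.cast_succ, add_assoc]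

lemma X_pow_mul_diffSeries {f : ℝ → ℝ} {a : ℝ} {m : ℕ} (hz : ∀ τ < m, fdiff^[τ] f a = 0) :
    X ^ m * diffSeries f a m = (1 - X) ^ m * diffSeries f a 0 := by
  induction m with
  | zero => simp
  | succ m ih =>
    rw [pow_succ, mul_assoc, X_mul_diffSeries_succ (hz m m.lt_succ_self),
      ← mul_assoc, mul_comm (X ^ m), mul_assoc, ih fun τ hτ => hz τ (hτ.trans m.lt_succ_self),
      ← mul_assoc, ← pow_succ']

theorem coeff_invOneSubRpow_mul_diffSeries {f : ℝ → ℝ} {a : ℝ} {m : ℕ}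
    (hz : ∀ τ < m, fdiff^[τ] f a = 0) (N : ℕ) :
    coeff N (invOneSubRpow m * diffSeries f a m) = f (a + m + N) := by
  have h : diffSeries f a 0 = X ^ m * (invOneSubRpow m * diffSeries f a m) := by
    rw [mul_left_comm, X_pow_mul_diffSeries hz, ← invOneSubRpow_neg_natCast, ← mul_assoc,
      invOneSubRpow_mul_neg, one_mul]
  rw [← coeff_X_pow_mul _ m, ← h, diffSeries, coeff_mk, Function.iterate_zero_apply]
  push_cast; ring_nf

lemma fsum_add_natCast_eq_coeff {ν : ℝ} (hν : 0 < ν) (a : ℝ) (g : ℝ → ℝ) (i : ℕ) :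
    fsum ν a g (a + ν + i) = coeff i (invOneSubRpow ν * mk fun p => g (a + p)) := by
  have hi : (⌊a + ν + i - ν - a⌋).toNat = i := by
    rw [show a + ν + i - ν - a = (i : ℝ) by ring, Int.floor_natCast, Int.toNat_natCast]
  rw [fsum, hi, ← mk_multichoose_eq, coeff_mk_mul, Finset.mul_sum]
  refine Finset.sum_congr rfl fun p hp => ?_
  have hp : p ≤ i := Nat.lt_succ_iff.mp (Finset.mem_range.mp hp)
  rw [coeff_mk, show a + ν + i - (a + p) - 1 = ((i - p : ℕ) : ℝ) + ν - 1 by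
    rw [Nat.cast_sub hp]; ring, gff_eq_Gamma_mul_multichoose hν]
  field_simp [(Real.Gamma_pos_of_pos hν).ne']

theorem eq_sum_multichoose_mul_caputo {μ : ℝ} (hμ : μ < ⌈μ⌉₊) {f : ℝ → ℝ} {a : ℝ}
    (hz : ∀ τ < ⌈μ⌉₊, fdiff^[τ] f a = 0) (N : ℕ) :
    f (a + ⌈μ⌉₊ + N) =
      ∑ i ∈ Finset.range (N + 1),
        Ring.multichoose μ (N - i) * caputo μ a f (a + (⌈μ⌉₊ - μ) + i) := by
  simp only [caputo, fsum_add_natCast_eq_coeff (sub_pos.mpr hμ)]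
  rw [← coeff_mk_mul, mk_multichoose_eq, ← mul_assoc, ← invOneSubRpow_add, add_sub_cancel,
    ← coeff_invOneSubRpow_mul_diffSeries hz]
  rfl

lemma sum_sq_le_sup'_inv_mul_sum_mul_sq {ι : Type*} {s : Finset ι} (hs : s.Nonempty)
    {C c : ι → ℝ} (hC : ∀ i ∈ s, 0 < C i) :
    ∑ i ∈ s, c i ^ 2 ≤ s.sup' hs (fun i => 1 / C i) * ∑ i ∈ s, C i * c i ^ 2 := by
  rw [Finset.mul_sum]
  refine Finset.sum_le_sum fun i hi => ?_
  calc c i ^ 2 = 1 / C i * (C i * c i ^ 2) := by field_simp [(hC i hi).ne']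
    _ ≤ _ := mul_le_mul_of_nonneg_right (Finset.le_sup' (fun i => 1 / C i) hi)
        (mul_nonneg (hC i hi).le (sq_nonneg _))

lemma sum_abs_rpow_rpow_le {ι : Type*} {s t : Finset ι} (hst : s ⊆ t) {r c : ℝ} (hr : 0 < r)
    (hc : 0 ≤ c) {x Y : ι → ℝ} (hY : ∀ j ∈ t, 0 ≤ Y j) (hxY : ∀ j ∈ s, x j ^ 2 ≤ c * Y j) :
    (∑ j ∈ s, |x j| ^ r) ^ (2 / r) ≤ c * (∑ j ∈ t, Y j ^ (r / 2)) ^ (2 / r) := by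
  have hpoint : ∀ j ∈ s, |x j| ^ r ≤ c ^ (r / 2) * Y j ^ (r / 2) := fun j hj => by
    rw [← Real.mul_rpow hc (hY j (hst hj))]
    calc |x j| ^ r = (|x j| ^ 2) ^ (r / 2) := by
          rw [← Real.rpow_natCast, ← Real.rpow_mul (abs_nonneg _)]; ring_nf
      _ ≤ (c * Y j) ^ (r / 2) :=
          Real.rpow_le_rpow (sq_nonneg _) ((sq_abs _).trans_le (hxY j hj)) (by positivity)
  have hsum : ∑ j ∈ s, |x j| ^ r ≤ c ^ (r / 2) * ∑ j ∈ t, Y j ^ (r / 2) := by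
    rw [Finset.mul_sum]
    exact (Finset.sum_le_sum hpoint).trans (Finset.sum_le_sum_of_subset_of_nonneg hst
      fun j hj _ => mul_nonneg (by positivity) (Real.rpow_nonneg (hY j hj) _))
  calc (∑ j ∈ s, |x j| ^ r) ^ (2 / r)
      ≤ (c ^ (r / 2) * ∑ j ∈ t, Y j ^ (r / 2)) ^ (2 / r) :=
        Real.rpow_le_rpow (Finset.sum_nonneg fun j _ => by positivity) hsum (by positivity)
    _ = c * (∑ j ∈ t, Y j ^ (r / 2)) ^ (2 / r) := by
        rw [Real.mul_rpow (by positivity) (Finset.sum_nonneg fun j hj =>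
          Real.rpow_nonneg (hY j hj) _), ← Real.rpow_mul hc,
          show r / 2 * (2 / r) = 1 by field_simp, Real.rpow_one]

-- For a single order `μ`: the paper's `δ_l` (before the maximum), `ρ_l` and `B_l`.
noncomputable def caputoKernelConst (μ : ℝ) (a b : ℕ) (r : ℝ) : ℝ :=
  (1 / Real.Gamma μ ^ 2) *
    (∑ j ∈ Finset.Icc (a + ⌈μ⌉₊) b,
        (∑ i ∈ Finset.range (j - (a + ⌈μ⌉₊) + 1),
            gff ((j : ℝ) - (a + ((⌈μ⌉₊ : ℝ) - μ) + i) - 1) (μ - 1) ^ 2) ^ (r / 2)) ^ (2 / r)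

noncomputable def caputoWeightConst (μ : ℝ) (a b : ℕ) (C : ℝ → ℝ) : ℝ :=
  (Finset.range (b - (a + ⌈μ⌉₊) + 1)).sup'
    (Finset.nonempty_range_iff.mpr (Nat.succ_ne_zero _))
    (fun i => 1 / C (a + ((⌈μ⌉₊ : ℝ) - μ) + i))

noncomputable def caputoEnergy (μ : ℝ) (a b : ℕ) (C : ℝ → ℝ) (f : ℝ → ℝ) : ℝ :=
  ∑ i ∈ Finset.range (b - (a + ⌈μ⌉₊) + 1),
    C (a + ((⌈μ⌉₊ : ℝ) - μ) + i) * caputo μ a f (a + ((⌈μ⌉₊ : ℝ) - μ) + i) ^ 2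

section CaputoConstants

variable {μ : ℝ} {a b : ℕ} {C : ℝ → ℝ}

lemma caputoKernelConst_nonneg (r : ℝ) : 0 ≤ caputoKernelConst μ a b r :=
  mul_nonneg (by positivity) (Real.rpow_nonneg (Finset.sum_nonneg fun _ _ =>
    Real.rpow_nonneg (Finset.sum_nonneg fun _ _ => sq_nonneg _) _) _)

lemma caputoWeightConst_nonneg
    (hC : ∀ i ≤ b - (a + ⌈μ⌉₊), 0 < C (a + ((⌈μ⌉₊ : ℝ) - μ) + i)) :
    0 ≤ caputoWeightConst μ a b C :=
  (one_div_pos.mpr (hC 0 (Nat.zero_le _))).le.trans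
    (Finset.le_sup' (fun i : ℕ => 1 / C (a + ((⌈μ⌉₊ : ℝ) - μ) + i)) (by simp))

lemma caputoEnergy_nonneg (hC : ∀ i ≤ b - (a + ⌈μ⌉₊), 0 < C (a + ((⌈μ⌉₊ : ℝ) - μ) + i))
    (f : ℝ → ℝ) : 0 ≤ caputoEnergy μ a b C f :=
  Finset.sum_nonneg fun i hi =>
    mul_nonneg (hC i (Nat.lt_succ_iff.mp (Finset.mem_range.mp hi))).le (sq_nonneg _)

lemma sum_caputo_sq_le (hC : ∀ i ≤ b - (a + ⌈μ⌉₊), 0 < C (a + ((⌈μ⌉₊ : ℝ) - μ) + i))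
    {f : ℝ → ℝ} {N : ℕ} (hN : a + ⌈μ⌉₊ + N ≤ b) :
    ∑ i ∈ Finset.range (N + 1), caputo μ a f (a + ((⌈μ⌉₊ : ℝ) - μ) + i) ^ 2 ≤
      caputoWeightConst μ a b C * caputoEnergy μ a b C f :=
  (Finset.sum_le_sum_of_subset_of_nonneg (Finset.range_subset_range.mpr (by omega))
    fun _ _ _ => sq_nonneg _).trans
    (sum_sq_le_sup'_inv_mul_sum_mul_sq _
      fun i hi => hC i (Nat.lt_succ_iff.mp (Finset.mem_range.mp hi)))

end CaputoConstants

section CaputoBound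

variable {μ : ℝ} {a b : ℕ} {C f : ℝ → ℝ}

theorem sq_le_caputoWeightConst_mul_caputoEnergy (hμ : 0 < μ) (hμm : μ < ⌈μ⌉₊)
    (hz : ∀ τ < ⌈μ⌉₊, fdiff^[τ] f a = 0)
    (hC : ∀ i ≤ b - (a + ⌈μ⌉₊), 0 < C (a + ((⌈μ⌉₊ : ℝ) - μ) + i)) {j : ℕ}
    (hj : j ∈ Finset.Icc (a + ⌈μ⌉₊) b) :
    f j ^ 2 ≤ caputoWeightConst μ a b C * caputoEnergy μ a b C f / Real.Gamma μ ^ 2 *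
      ∑ i ∈ Finset.range (j - (a + ⌈μ⌉₊) + 1),
        gff ((j : ℝ) - (a + ((⌈μ⌉₊ : ℝ) - μ) + i) - 1) (μ - 1) ^ 2 := by
  obtain ⟨hj₁, hjb⟩ := Finset.mem_Icc.mp hj
  obtain ⟨N, rfl⟩ := Nat.exists_eq_add_of_le hj₁
  have hΓ : Real.Gamma μ ≠ 0 := (Real.Gamma_pos_of_pos hμ).ne'
  have hkernel : ∀ i ∈ Finset.range (N + 1),
      gff (((a + ⌈μ⌉₊ + N : ℕ) : ℝ) - (a + ((⌈μ⌉₊ : ℝ) - μ) + i) - 1) (μ - 1) ^ 2 =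
        Real.Gamma μ ^ 2 * Ring.multichoose μ (N - i) ^ 2 := fun i hi => by
    have hi : i ≤ N := Nat.lt_succ_iff.mp (Finset.mem_range.mp hi)
    rw [← mul_pow, ← gff_eq_Gamma_mul_multichoose hμ, Nat.cast_sub hi]
    push_cast; ring_nf
  rw [Nat.add_sub_cancel_left, Finset.sum_congr rfl hkernel, ← Finset.mul_sum,
    show ((a + ⌈μ⌉₊ + N : ℕ) : ℝ) = (a : ℝ) + ⌈μ⌉₊ + N by push_cast; ring,
    eq_sum_multichoose_mul_caputo hμm hz]
  calc _ ≤ (∑ i ∈ Finset.range (N + 1), Ring.multichoose μ (N - i) ^ 2) *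
        ∑ i ∈ Finset.range (N + 1), caputo μ a f (a + ((⌈μ⌉₊ : ℝ) - μ) + i) ^ 2 :=
        Finset.sum_mul_sq_le_sq_mul_sq _ _ _
    _ ≤ (∑ i ∈ Finset.range (N + 1), Ring.multichoose μ (N - i) ^ 2) *
        (caputoWeightConst μ a b C * caputoEnergy μ a b C f) :=
        mul_le_mul_of_nonneg_left (sum_caputo_sq_le hC hjb)
          (Finset.sum_nonneg fun _ _ => sq_nonneg _)
    _ = _ := by field_simp

theorem sum_abs_rpow_rpow_le_caputoKernelConst_mul (hμ : 0 < μ) (hμm : μ < ⌈μ⌉₊) {M : ℕ}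
    (hM : ⌈μ⌉₊ ≤ M) (hz : ∀ τ < M, fdiff^[τ] f a = 0) {r : ℝ} (hr : 0 < r)
    (hC : ∀ i ≤ b - (a + ⌈μ⌉₊), 0 < C (a + ((⌈μ⌉₊ : ℝ) - μ) + i)) :
    (∑ j ∈ Finset.Icc (a + M) b, |f j| ^ r) ^ (2 / r) ≤
      caputoKernelConst μ a b r * (caputoWeightConst μ a b C * caputoEnergy μ a b C f) := by
  have hρB := mul_nonneg (caputoWeightConst_nonneg hC) (caputoEnergy_nonneg hC f)
  have hst := Finset.Icc_subset_Icc (Nat.add_le_add_left hM a) (le_refl b)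
  refine (sum_abs_rpow_rpow_le hst hr
    (div_nonneg hρB (sq_nonneg _)) (fun j _ => Finset.sum_nonneg fun _ _ => sq_nonneg _)
    fun j hj => sq_le_caputoWeightConst_mul_caputoEnergy hμ hμm
      (fun τ hτ => hz τ (hτ.trans_le hM)) hC (hst hj)).trans_eq ?_
  rw [caputoKernelConst]
  ring

end CaputoBound

lemma le_sup'_mul_sup'_mul_average {ι : Type*} {s : Finset ι} (hs : s.Nonempty) {x : ℝ}
    {δ ρ B : ι → ℝ} (hδ : ∀ l ∈ s, 0 ≤ δ l) (hρ : ∀ l ∈ s, 0 ≤ ρ l) (hB : ∀ l ∈ s, 0 ≤ B l)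
    (h : ∀ l ∈ s, x ≤ δ l * (ρ l * B l)) :
    x ≤ s.sup' hs δ * s.sup' hs ρ * ((∑ l ∈ s, B l) / s.card) := by
  obtain ⟨l₀, hl₀⟩ := hs
  have hδ₀ : 0 ≤ s.sup' ⟨l₀, hl₀⟩ δ := (hδ l₀ hl₀).trans (s.le_sup' δ hl₀)
  have hbound : ∀ l ∈ s, x ≤ s.sup' ⟨l₀, hl₀⟩ δ * s.sup' ⟨l₀, hl₀⟩ ρ * B l := fun l hl =>
    calc x ≤ δ l * (ρ l * B l) := h l hl
      _ ≤ s.sup' ⟨l₀, hl₀⟩ δ * (s.sup' ⟨l₀, hl₀⟩ ρ * B l) :=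
          mul_le_mul (s.le_sup' δ hl) (mul_le_mul_of_nonneg_right (s.le_sup' ρ hl) (hB l hl))
            (mul_nonneg (hρ l hl) (hB l hl)) hδ₀
      _ = _ := by ring
  have hcard : (0 : ℝ) < s.card := by exact_mod_cast Finset.card_pos.mpr ⟨l₀, hl₀⟩
  rw [← mul_div_assoc, le_div_iff₀ hcard, Finset.mul_sum, mul_comm, ← nsmul_eq_mul,
    ← Finset.sum_const]
  exact Finset.sum_le_sum hbound

lemma rpow_one_div_le_sqrt_mul_rpow_half {S r P Q : ℝ} (hS : 0 ≤ S) (hQ : 0 ≤ Q)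
    (h : S ^ (2 / r) ≤ P * Q) : S ^ (1 / r) ≤ Real.sqrt P * Q ^ ((1 : ℝ) / 2) := by
  rw [← Real.sqrt_eq_rpow, ← Real.sqrt_mul' _ hQ]
  refine Real.le_sqrt_of_sq_le ?_
  rw [← Real.rpow_natCast, ← Real.rpow_mul hS]
  convert h using 2
  push_cast; ring

theorem stmt16_general (k : ℕ) (hk : 0 < k) (μ : ℕ → ℝ) (hμ0 : 0 < μ 0)
    (hmono : ∀ l₁ l₂, l₁ < l₂ → l₂ < k → μ l₁ < μ l₂)
    (hni : ∀ l < k, ∀ n : ℤ, μ l ≠ n) (f : ℝ → ℝ) (a b : ℕ)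
    (hz : ∀ τ < ⌈μ (k - 1)⌉₊, fdiff^[τ] f a = 0)
    (r : ℝ) (hr : 1 ≤ r) (C : ℕ → ℝ → ℝ)
    (hC : ∀ l < k, ∀ i ≤ b - (a + ⌈μ l⌉₊),
      0 < C l (a + ((⌈μ l⌉₊ : ℝ) - μ l) + i)) :
    (∑ j ∈ Finset.Icc (a + ⌈μ (k - 1)⌉₊) b, |f (j : ℝ)| ^ r) ^ (1 / r) ≤
      Real.sqrt
        (((Finset.range k).sup' (Finset.nonempty_range_iff.mpr hk.ne')
            (fun l =>
              (1 / Real.Gamma (μ l) ^ 2) *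
                (∑ j ∈ Finset.Icc (a + ⌈μ l⌉₊) b,
                    (∑ i ∈ Finset.range (j - (a + ⌈μ l⌉₊) + 1),
                        gff ((j : ℝ) - (a + ((⌈μ l⌉₊ : ℝ) - μ l) + i) - 1)
                            (μ l - 1) ^ 2) ^ (r / 2)) ^ (2 / r))) *
          ((Finset.range k).sup' (Finset.nonempty_range_iff.mpr hk.ne')
            (fun l =>
              (Finset.range (b - (a + ⌈μ l⌉₊) + 1)).sup'
                (Finset.nonempty_range_iff.mpr (Nat.succ_ne_zero _))
                (fun i => 1 / C l (a + ((⌈μ l⌉₊ : ℝ) - μ l) + i))))) *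
        ((∑ l ∈ Finset.range k,
            ∑ i ∈ Finset.range (b - (a + ⌈μ l⌉₊) + 1),
              C l (a + ((⌈μ l⌉₊ : ℝ) - μ l) + i) *
                caputo (μ l) a f (a + ((⌈μ l⌉₊ : ℝ) - μ l) + i) ^ 2) / k) ^
          ((1 : ℝ) / 2) := by
  have hr₀ : 0 < r := one_pos.trans_le hr
  have hμ_pos : ∀ l < k, 0 < μ l := fun l hl =>
    (Nat.eq_zero_or_pos l).elim (fun h => h ▸ hμ0) fun h => hμ0.trans (hmono 0 l h hl)
  have hceil : ∀ l < k, ⌈μ l⌉₊ ≤ ⌈μ (k - 1)⌉₊ := fun l hl => Nat.ceil_mono <|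
    (Nat.le_sub_one_of_lt hl).eq_or_lt.elim (fun h => h ▸ le_rfl)
      fun h => (hmono l (k - 1) h (by omega)).le
  have hfrac : ∀ l < k, μ l < ⌈μ l⌉₊ := fun l hl =>
    (Nat.le_ceil _).lt_of_ne fun h => hni l hl ⌈μ l⌉₊ (by exact_mod_cast h)
  set S := ∑ j ∈ Finset.Icc (a + ⌈μ (k - 1)⌉₊) b, |f (j : ℝ)| ^ r
  have hS : 0 ≤ S := Finset.sum_nonneg fun _ _ => by positivity
  have hC' : ∀ l ∈ Finset.range k, ∀ i ≤ b - (a + ⌈μ l⌉₊),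
      0 < C l (a + ((⌈μ l⌉₊ : ℝ) - μ l) + i) := fun l hl => hC l (Finset.mem_range.mp hl)
  have key := le_sup'_mul_sup'_mul_average (Finset.nonempty_range_iff.mpr hk.ne')
    (fun l _ => caputoKernelConst_nonneg r) (fun l hl => caputoWeightConst_nonneg (hC' l hl))
    (fun l hl => caputoEnergy_nonneg (hC' l hl) f) fun l hl =>
      sum_abs_rpow_rpow_le_caputoKernelConst_mul (hμ_pos l (Finset.mem_range.mp hl))
        (hfrac l (Finset.mem_range.mp hl)) (hceil l (Finset.mem_range.mp hl)) hz hr₀ (hC' l hl)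
  rw [Finset.card_range] at key
  exact rpow_one_div_le_sqrt_mul_rpow_half hS (div_nonneg (Finset.sum_nonneg fun l hl =>
    caputoEnergy_nonneg (hC' l hl) f) k.cast_nonneg) key

theorem stmt16 (k : ℕ) (hk : 0 < k) (μ : ℕ → ℝ) (hμ0 : 0 < μ 0)
    (hmono : ∀ l₁ l₂, l₁ < l₂ → l₂ < k → μ l₁ < μ l₂)
    (hni : ∀ l < k, ∀ n : ℤ, μ l ≠ n) (f : ℝ → ℝ) (a b : ℕ)
    (hb : a + ⌈μ (k - 1)⌉₊ < b)
    (hz : ∀ τ < ⌈μ (k - 1)⌉₊, fdiff^[τ] f a = 0)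
    (r : ℝ) (hr : 1 ≤ r) (C : ℕ → ℝ → ℝ)
    (hC : ∀ l < k, ∀ i ≤ b - (a + ⌈μ l⌉₊),
      0 < C l (a + ((⌈μ l⌉₊ : ℝ) - μ l) + i)) :
    (∑ j ∈ Finset.Icc (a + ⌈μ (k - 1)⌉₊) b, |f (j : ℝ)| ^ r) ^ (1 / r) ≤
      Real.sqrt
        (((Finset.range k).sup' (Finset.nonempty_range_iff.mpr hk.ne')
            (fun l =>
              (1 / Real.Gamma (μ l) ^ 2) *
                (∑ j ∈ Finset.Icc (a + ⌈μ l⌉₊) b,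
                    (∑ i ∈ Finset.range (j - (a + ⌈μ l⌉₊) + 1),
                        gff ((j : ℝ) - (a + ((⌈μ l⌉₊ : ℝ) - μ l) + i) - 1)
                            (μ l - 1) ^ 2) ^ (r / 2)) ^ (2 / r))) *
          ((Finset.range k).sup' (Finset.nonempty_range_iff.mpr hk.ne')
            (fun l =>
              (Finset.range (b - (a + ⌈μ l⌉₊) + 1)).sup'
                (Finset.nonempty_range_iff.mpr (Nat.succ_ne_zero _))
                (fun i => 1 / C l (a + ((⌈μ l⌉₊ : ℝ) - μ l) + i))))) *
        ((∑ l ∈ Finset.range k,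
            ∑ i ∈ Finset.range (b - (a + ⌈μ l⌉₊) + 1),
              C l (a + ((⌈μ l⌉₊ : ℝ) - μ l) + i) *
                caputo (μ l) a f (a + ((⌈μ l⌉₊ : ℝ) - μ l) + i) ^ 2) / k) ^
          ((1 : ℝ) / 2) :=
  stmt16_general k hk μ hμ0 hmono hni f a b hz r hr C hC
end
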